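/- Let a : ℝ → ℝ be continuously differentiable, 1-periodic, and strictly positive. Then ⟨a⁻¹·[[a⁻³a′]]⟩ = −⟨a⁻³a′·[[a⁻¹]]⟩ = −(1/2)(⟨a⁻³⟩ − ⟨a⁻¹⟩⟨a⁻²⟩). (This is the closed form of the homogenization coefficient C₅, up to the factor 1/ρ⁽⁰⁾².) -/

import Mathlib

open MeasureTheory Matrix

/-- The mean of a function over one period: `⟨b⟩ = ∫₀¹ b(y) dy`. -/
noncomputable def pmean (b : ℝ → ℝ) : ℝ := ∫ y in (0:ℝ)..1, b y

/-- The fluctuating (mean-zero) part: `{b} = b − ⟨b⟩`. -/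
noncomputable def pfluct (b : ℝ → ℝ) : ℝ → ℝ := fun y => b y - pmean b

/-- The mean-zero primitive of the fluctuating part:
`[[b]](y) = ∫₀^y {b}(ξ) dξ − ∫₀¹ (∫₀^s {b}(ξ) dξ) ds`. -/
noncomputable def pbracket (b : ℝ → ℝ) : ℝ → ℝ :=
  fun y => (∫ ξ in (0:ℝ)..y, pfluct b ξ) - ∫ s in (0:ℝ)..1, (∫ ξ in (0:ℝ)..s, pfluct b ξ)

/-!
`F = −a⁻²/2` is a periodic primitive of `a⁻³a′`, so `[[a⁻³a′]] = {F}`, and integrating by parts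
over a period gives `⟨F′·[[a⁻¹]]⟩ = −⟨F·{a⁻¹}⟩`. Hence both means are, up to sign, the
covariance `⟨a⁻¹F⟩ − ⟨a⁻¹⟩⟨F⟩ = −(1/2)(⟨a⁻³⟩ − ⟨a⁻¹⟩⟨a⁻²⟩)`.
-/

lemma pmean_const_mul (c : ℝ) (f : ℝ → ℝ) : pmean (fun y => c * f y) = c * pmean f :=
  intervalIntegral.integral_const_mul c f

lemma pmean_pfluct {f : ℝ → ℝ} (hf : IntervalIntegrable f volume 0 1) : pmean (pfluct f) = 0 := by
  simp [pmean, pfluct, intervalIntegral.integral_sub hf intervalIntegrable_const]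

lemma pmean_mul_pfluct {f g : ℝ → ℝ} (hf : IntervalIntegrable f volume 0 1)
    (hfg : IntervalIntegrable (fun y => f y * g y) volume 0 1) :
    pmean (fun y => f y * pfluct g y) = pmean (fun y => f y * g y) - pmean f * pmean g := by
  simp only [pfluct, mul_sub]
  rw [pmean, intervalIntegral.integral_sub hfg (hf.mul_const _),
    intervalIntegral.integral_mul_const, ← pmean, ← pmean]

lemma pfluct_eq_self_of_pmean_eq_zero {f : ℝ → ℝ} (hf : pmean f = 0) : pfluct f = f := by
  funext y; simp [pfluct, hf]

lemma pbracket_eq_pfluct_of_hasDerivAt {F f : ℝ → ℝ} (hF : ∀ x, HasDerivAt F (f x) x)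
    (hf : Continuous f) (hper : F 1 = F 0) : pbracket f = pfluct F := by
  have primitive (y : ℝ) : ∫ ξ in (0:ℝ)..y, f ξ = F y - F 0 :=
    intervalIntegral.integral_eq_sub_of_hasDerivAt (fun x _ => hF x) (hf.intervalIntegrable _ _)
  have hFc : Continuous F := continuous_iff_continuousAt.2 fun x => (hF x).continuousAt
  have hmean : pmean f = 0 := by rw [pmean, primitive, hper, sub_self]
  funext y
  simp only [pbracket, pfluct_eq_self_of_pmean_eq_zero hmean, primitive]
  rw [intervalIntegral.integral_sub (hFc.intervalIntegrable _ _) intervalIntegrable_const,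
    intervalIntegral.integral_const, ← pmean, pfluct]
  simp

lemma hasDerivAt_pbracket {b : ℝ → ℝ} (hb : Continuous b) (y : ℝ) :
    HasDerivAt (pbracket b) (pfluct b y) y :=
  ((hb.sub continuous_const).integral_hasStrictDerivAt 0 y).hasDerivAt.sub_const _

lemma pbracket_one {b : ℝ → ℝ} (hb : IntervalIntegrable b volume 0 1) :
    pbracket b 1 = pbracket b 0 := by
  have h := pmean_pfluct hb
  rw [pmean] at h
  simp [pbracket, h]

lemma pmean_deriv_mul_eq_neg_pmean_mul_deriv {u u' v v' : ℝ → ℝ}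
    (hu : ∀ x, HasDerivAt u (u' x) x) (hv : ∀ x, HasDerivAt v (v' x) x)
    (hu' : IntervalIntegrable u' volume 0 1) (hv' : IntervalIntegrable v' volume 0 1)
    (hu1 : u 1 = u 0) (hv1 : v 1 = v 0) :
    pmean (fun y => u' y * v y) = - pmean (fun y => u y * v' y) := by
  rw [pmean, pmean, intervalIntegral.integral_mul_deriv_eq_deriv_mul (fun x _ => hu x)
    (fun x _ => hv x) hu' hv', hu1, hv1]
  ring

lemma hasDerivAt_neg_inv_sq_div_two {a : ℝ → ℝ} {a' y : ℝ} (ha : HasDerivAt a a' y)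
    (hy : a y ≠ 0) : HasDerivAt (fun z => -(a z ^ 2)⁻¹ / 2) ((a y ^ 3)⁻¹ * a') y := by
  have h : HasDerivAt (fun z => -(a z ^ 2)⁻¹ / 2)
      (-(-(((2 : ℕ) : ℝ) * a y ^ (2 - 1) * a') / (a y ^ 2) ^ 2) / 2) y :=
    ((ha.fun_pow 2).fun_inv (pow_ne_zero 2 hy)).fun_neg.div_const 2
  convert h using 1
  field_simp
  ring

/-- For `a` continuously differentiable, 1-periodic and strictly positive,
`⟨a⁻¹·[[a⁻³a′]]⟩ = −⟨a⁻³a′·[[a⁻¹]]⟩ = −(1/2)(⟨a⁻³⟩ − ⟨a⁻¹⟩⟨a⁻²⟩)`. -/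
theorem statement6 (a : ℝ → ℝ) (ha : ContDiff ℝ 1 a) (hper : Function.Periodic a 1)
    (hpos : ∀ y, 0 < a y) :
    pmean (fun y => (a y)⁻¹ * pbracket (fun z => (a z ^ 3)⁻¹ * deriv a z) y)
      = - pmean (fun y => (a y ^ 3)⁻¹ * deriv a y * pbracket (fun z => (a z)⁻¹) y) ∧
    pmean (fun y => (a y)⁻¹ * pbracket (fun z => (a z ^ 3)⁻¹ * deriv a z) y)
      = -(1/2) * (pmean (fun y => (a y ^ 3)⁻¹)
          - pmean (fun y => (a y)⁻¹) * pmean (fun y => (a y ^ 2)⁻¹)) := by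
  have ha0 (y : ℝ) : a y ≠ 0 := (hpos y).ne'
  have hinv : Continuous fun y => (a y)⁻¹ := ha.continuous.inv₀ ha0
  have hinv2 : Continuous fun y => (a y ^ 2)⁻¹ := (ha.continuous.pow 2).inv₀ (by simp [ha0])
  have hF (y : ℝ) : HasDerivAt (fun z => -(a z ^ 2)⁻¹ / 2) ((a y ^ 3)⁻¹ * deriv a y) y :=
    hasDerivAt_neg_inv_sq_div_two ((ha.differentiable one_ne_zero y).hasDerivAt) (ha0 y)
  have hFc : Continuous fun y => -(a y ^ 2)⁻¹ / 2 := hinv2.neg.div_const 2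
  have hF' : Continuous fun y => (a y ^ 3)⁻¹ * deriv a y :=
    ((ha.continuous.pow 3).inv₀ (by simp [ha0])).mul (ha.continuous_deriv le_rfl)
  have hper1 : a 1 = a 0 := by simpa using hper 0
  have hmeanF : pmean (fun y => -(a y ^ 2)⁻¹ / 2) = -(1/2) * pmean (fun y => (a y ^ 2)⁻¹) := by
    rw [← pmean_const_mul]; congr 1; funext y; ring
  have hcov : pmean (fun y => (a y)⁻¹ * (-(a y ^ 2)⁻¹ / 2)) =
      -(1/2) * pmean (fun y => (a y ^ 3)⁻¹) := by
    rw [← pmean_const_mul]; congr 1; funext y; field_simp [ha0 y]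
  have hfirst : pmean (fun y => (a y)⁻¹ * pbracket (fun z => (a z ^ 3)⁻¹ * deriv a z) y)
      = -(1/2) * (pmean (fun y => (a y ^ 3)⁻¹)
          - pmean (fun y => (a y)⁻¹) * pmean (fun y => (a y ^ 2)⁻¹)) := by
    rw [pbracket_eq_pfluct_of_hasDerivAt hF hF' (by simp [hper1]),
      pmean_mul_pfluct (hinv.intervalIntegrable _ _) ((hinv.mul hFc).intervalIntegrable _ _),
      hcov, hmeanF]
    ring
  have hsecond : pmean (fun y => (a y ^ 3)⁻¹ * deriv a y * pbracket (fun z => (a z)⁻¹) y)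
      = -pmean (fun y => (a y)⁻¹ * pbracket (fun z => (a z ^ 3)⁻¹ * deriv a z) y) := by
    rw [pmean_deriv_mul_eq_neg_pmean_mul_deriv hF (hasDerivAt_pbracket hinv)
      (hF'.intervalIntegrable _ _) ((hinv.sub continuous_const).intervalIntegrable _ _)
      (by simp [hper1]) (pbracket_one (hinv.intervalIntegrable _ _)),
      pmean_mul_pfluct (hFc.intervalIntegrable _ _) ((hFc.mul hinv).intervalIntegrable _ _),
      hfirst]
    simp only [mul_comm (-(a _ ^ 2)⁻¹ / 2), hcov, hmeanF]
    ring
  exact ⟨by rw [hsecond, neg_neg], hfirst⟩
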